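/- arXiv:1605.08364 — 4 statements merged into one kernel-verified Lean document; each statement's English description precedes it below -/
import Mathlib

section
/- For integers 1 ≤ i < k ≤ N, the probability that the maturity time T(i) of a candidate with relative rank 2 at time i equals k is 2(i-1)i/((k-2)(k-1)k), i.e. the probability that in a uniformly random permutation of {1,...,N}, given Y_i = 2, the relative ranks satisfy Y_{i+1}>2, ..., Y_{k-1}>2 and Y_k ∈ {1,2}, equals 2(i-1)i/((k-2)(k-1)k). -/
/-- Relative rank of the observation at (0-based) time `t`: the number of
indices `j ≤ t` with `σ j ≤ σ t`. -/
def relRank (N : ℕ) (σ : Equiv.Perm (Fin N)) (t : Fin N) : ℕ :=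
  (Finset.univ.filter (fun j : Fin N => j ≤ t ∧ σ j ≤ σ t)).card

/-!
The relative ranks determine the permutation: the relative order of two entries is recovered
from the ranks by induction on the later position. Since there are `N! = ∏ₜ t` rank vectors,
`σ ↦ (Y_1, …, Y_N)` is a bijection onto `∏ₜ [1, t]`, so the number of permutations whose ranks
satisfy a constraint at each time is the product of the per-time counts. The conditional
probability is then a product of per-time ratios: `1` outside `(i, k]`, `(t - 2)/t` at times
`i < t < k` and `2/k` at time `k`; the product telescopes to `2(i-1)i/((k-2)(k-1)k)`.
-/

open Finset

theorem forall_fin_val_eq_imp_iff {N a : ℕ} (ha : a < N) {P : Fin N → Prop} :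
    (∀ t : Fin N, (t : ℕ) = a → P t) ↔ P ⟨a, ha⟩ :=
  ⟨fun h => h _ rfl, fun h t ht => by rwa [show t = ⟨a, ha⟩ from Fin.ext ht]⟩

theorem Equiv.Perm.card_filter_apply_lt {N : ℕ} (σ : Equiv.Perm (Fin N)) (y : Fin N) :
    #{b | σ b < y} = y := by
  rw [← Fin.card_Iio]
  exact card_equiv σ (by simp)

theorem card_filter_fin_val_add_one {n : ℕ} (q : ℕ → Prop) [DecidablePred q] :
    #{c : Fin n | q (c + 1)} = #{r ∈ Icc 1 n | q r} := by
  refine card_nbij (fun c => c + 1) (fun c hc => ?_) (fun c _ d _ h => ?_) fun r hr => ?_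
  · simp_all [Nat.succ_le_of_lt c.2]
  · simpa [Fin.val_inj] using h
  · simp only [coe_filter, mem_Icc, Set.mem_ofPred_eq] at hr
    exact ⟨⟨r - 1, by omega⟩, by simp [Nat.sub_add_cancel hr.1.1, hr.2], by simp; omega⟩

theorem prod_Ico_sub_one_div_add_one {i K : ℕ} (hi : 2 ≤ i) (hiK : i ≤ K) :
    ∏ t ∈ Ico i K, ((t : ℝ) - 1) / (t + 1) = (i - 1) * i / ((K - 1) * K) := by
  induction K, hiK using Nat.le_induction with
  | base =>
    have : (i : ℝ) - 1 ≠ 0 := by rw [sub_ne_zero]; exact_mod_cast (by omega : i ≠ 1)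
    simp [this, show (i : ℝ) ≠ 0 by positivity]
  | succ K hiK ih =>
    have hK : (K : ℝ) - 1 ≠ 0 := by rw [sub_ne_zero]; exact_mod_cast (by omega : K ≠ 1)
    have hK0 : (K : ℝ) ≠ 0 := by exact_mod_cast (by omega : K ≠ 0)
    rw [prod_Ico_succ_top hiK, ih]
    push_cast
    rw [add_sub_cancel_right]
    field_simp

section RelRank

variable {N : ℕ}

theorem relRank_eq_card_lt_add_one (σ : Equiv.Perm (Fin N)) (t : Fin N) :
    relRank N σ t = #{j | j < t ∧ σ j < σ t} + 1 := by
  rw [relRank, ← card_insert_of_notMem (a := t) (by simp)]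
  congr 1
  ext j
  rcases eq_or_ne j t with rfl | hjt
  · simp
  · simp [hjt, le_iff_lt_or_eq, σ.injective.eq_iff]

theorem one_le_relRank (σ : Equiv.Perm (Fin N)) (t : Fin N) : 1 ≤ relRank N σ t := by
  rw [relRank_eq_card_lt_add_one]
  omega

theorem relRank_le (σ : Equiv.Perm (Fin N)) (t : Fin N) : relRank N σ t ≤ t + 1 :=
  calc relRank N σ t ≤ #(Iic t) := card_le_card fun j => by simp +contextual
    _ = t + 1 := Fin.card_Iic t

theorem apply_lt_iff_card_lt_relRank (σ : Equiv.Perm (Fin N)) {j t : Fin N} (hjt : j < t) :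
    σ j < σ t ↔ #{j' | j' < t ∧ σ j' ≤ σ j} < relRank N σ t := by
  rw [relRank_eq_card_lt_add_one, Nat.lt_succ_iff]
  constructor
  · intro h
    exact card_le_card fun j' => by
      simp only [mem_filter, mem_univ, true_and]
      exact fun ⟨h₁, h₂⟩ => ⟨h₁, h₂.trans_lt h⟩
  · intro hcard
    by_contra! h
    have hlt : σ t < σ j := h.lt_of_ne (σ.injective.ne hjt.ne')
    refine (card_lt_card ((ssubset_iff_of_subset fun j' => ?_).2 ⟨j, ?_, ?_⟩)).not_ge hcard
    · simp only [mem_filter, mem_univ, true_and]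
      exact fun ⟨h₁, h₂⟩ => ⟨h₁, (h₂.trans hlt).le⟩
    · simp [hjt]
    · simp [hlt.le, not_lt_of_ge]

theorem apply_lt_apply_iff_of_relRank_eq {σ τ : Equiv.Perm (Fin N)}
    (h : ∀ t, relRank N σ t = relRank N τ t) (a b : Fin N) : σ a < σ b ↔ τ a < τ b := by
  -- Induction on a bound `v` for the positions: a pair whose later position is the new one
  -- is settled by `apply_lt_iff_card_lt_relRank`, whose count only involves earlier positions.
  suffices ∀ v, ∀ a b : Fin N, (a : ℕ) < v → (b : ℕ) < v → (σ a < σ b ↔ τ a < τ b) from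
    this N a b a.2 b.2
  intro v
  induction v with
  | zero => simp
  | succ v ih =>
    have hle : ∀ a b : Fin N, (a : ℕ) < v → (b : ℕ) < v → (σ a ≤ σ b ↔ τ a ≤ τ b) :=
      fun a b ha hb => by simp only [← not_lt, ih b a hb ha]
    have hlast : ∀ a b : Fin N, (a : ℕ) < v → (b : ℕ) = v → (σ a < σ b ↔ τ a < τ b) := by
      intro a b ha hb
      have hab : a < b := Fin.lt_def.2 (hb ▸ ha)
      rw [apply_lt_iff_card_lt_relRank σ hab, apply_lt_iff_card_lt_relRank τ hab, h b]
      refine Iff.of_eq (congrArg (· < _) (congrArg card (filter_congr fun j _ => ?_)))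
      exact and_congr_right fun hj => hle j a (by omega) ha
    intro a b ha hb
    rcases Nat.lt_succ_iff_lt_or_eq.1 ha, Nat.lt_succ_iff_lt_or_eq.1 hb with
      ⟨ha | ha, hb | hb⟩
    · exact ih a b ha hb
    · exact hlast a b ha hb
    · have hba : b ≠ a := Fin.ne_of_val_ne (by omega)
      rw [lt_iff_not_ge, lt_iff_not_ge, (σ.injective.ne hba).le_iff_lt,
        (τ.injective.ne hba).le_iff_lt, hlast b a hb ha]
    · obtain rfl : a = b := Fin.ext (ha.trans hb.symm)
      simp

theorem eq_of_relRank_eq {σ τ : Equiv.Perm (Fin N)} (h : ∀ t, relRank N σ t = relRank N τ t) :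
    σ = τ := by
  ext a
  rw [← σ.card_filter_apply_lt, ← τ.card_filter_apply_lt]
  simp only [apply_lt_apply_iff_of_relRank_eq h]

def relRankCode (σ : Equiv.Perm (Fin N)) (t : Fin N) : Fin (t + 1) :=
  ⟨relRank N σ t - 1, by have := relRank_le σ t; omega⟩

theorem relRankCode_injective : Function.Injective (relRankCode (N := N)) :=
  fun σ τ h => eq_of_relRank_eq fun t => by
    have hcode : relRank N σ t - 1 = relRank N τ t - 1 := congrArg Fin.val (congrFun h t)
    have := one_le_relRank σ t
    have := one_le_relRank τ t
    omega

theorem relRankCode_bijective : Function.Bijective (relRankCode (N := N)) := by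
  refine (Fintype.bijective_iff_injective_and_card _).2 ⟨relRankCode_injective, ?_⟩
  simp only [Fintype.card_perm, Fintype.card_pi, Fintype.card_fin]
  rw [Fin.prod_univ_eq_prod_range (· + 1), prod_range_add_one_eq_factorial]

theorem card_filter_forall_relRank (p : Fin N → ℕ → Prop) [∀ t, DecidablePred (p t)]
    [DecidablePred fun σ : Equiv.Perm (Fin N) => ∀ t, p t (relRank N σ t)] :
    #{σ : Equiv.Perm (Fin N) | ∀ t, p t (relRank N σ t)} =
      ∏ t, #{r ∈ Icc 1 (t + 1) | p t r} := by
  simp only [← card_filter_fin_val_add_one]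
  rw [← Fintype.card_piFinset]
  refine card_equiv (Equiv.ofBijective _ relRankCode_bijective) fun σ => ?_
  simp only [mem_filter, mem_univ, true_and, Fintype.mem_piFinset, Equiv.ofBijective_apply,
    relRankCode]
  refine forall_congr' fun t => ?_
  rw [Nat.sub_add_cancel (one_le_relRank σ t)]

end RelRank

section Maturity

variable {i k t : ℕ}

/- The constraints on the relative rank `r` at the 0-based position `t` (time `t + 1`) that
define the events `{Y_i = 2}` and `{Y_i = 2, T(i) = k}`. -/
abbrev candidateRank (i t r : ℕ) : Prop := t = i - 1 → r = 2

abbrev maturityRank (i k t r : ℕ) : Prop :=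
  candidateRank i t r ∧ (i ≤ t → t + 1 < k → 2 < r) ∧ (t = k - 1 → r = 1 ∨ r = 2)

theorem filter_maturityRank_eq_of_notMem (hik : i < k) (ht : t ∉ Ico i k) :
    {r ∈ Icc 1 (t + 1) | maturityRank i k t r} = {r ∈ Icc 1 (t + 1) | candidateRank i t r} := by
  rw [mem_Ico] at ht
  exact filter_congr fun r _ => by omega

theorem card_filter_candidateRank_pos (hi : 2 ≤ i) :
    0 < #{r ∈ Icc 1 (t + 1) | candidateRank i t r} :=
  card_pos.2 ⟨if t = i - 1 then 2 else 1, by split_ifs <;> simp <;> omega⟩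

theorem card_filter_candidateRank_of_ne (ht : t ≠ i - 1) :
    #{r ∈ Icc 1 (t + 1) | candidateRank i t r} = t + 1 := by
  rw [filter_true_of_mem fun r _ => fun h => absurd h ht, Nat.card_Icc, Nat.add_sub_cancel]

theorem card_filter_maturityRank_of_lt (hit : i ≤ t) (htk : t + 1 < k) :
    #{r ∈ Icc 1 (t + 1) | maturityRank i k t r} = t - 1 := by
  rw [show {r ∈ Icc 1 (t + 1) | maturityRank i k t r} = Icc 3 (t + 1) by ext r; simp; omega,
    Nat.card_Icc]
  omega

theorem card_filter_maturityRank_of_succ_eq (hi : 1 ≤ i) (hit : i ≤ t) (htk : t + 1 = k) :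
    #{r ∈ Icc 1 (t + 1) | maturityRank i k t r} = 2 := by
  rw [show {r ∈ Icc 1 (t + 1) | maturityRank i k t r} = {1, 2} by ext r; simp; omega]
  rfl

theorem prod_range_maturityRank_div_candidateRank {N : ℕ} (hi : 2 ≤ i) (hik : i < k)
    (hk : k ≤ N) :
    ∏ t ∈ range N, (#{r ∈ Icc 1 (t + 1) | maturityRank i k t r} : ℝ) /
      #{r ∈ Icc 1 (t + 1) | candidateRank i t r} =
      2 * ((i : ℝ) - 1) * i / (((k : ℝ) - 2) * ((k : ℝ) - 1) * k) := by
  rw [← prod_subset (s₁ := Ico i k) (fun t ht => by simp at ht ⊢; omega)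
    fun t _ ht => by
      rw [filter_maturityRank_eq_of_notMem hik ht, div_self]
      exact_mod_cast (card_filter_candidateRank_pos hi).ne']
  obtain ⟨K, rfl⟩ : ∃ K, k = K + 1 := ⟨k - 1, by omega⟩
  have hinterior : ∀ t ∈ Ico i K, (#{r ∈ Icc 1 (t + 1) | maturityRank i (K + 1) t r} : ℝ) /
      #{r ∈ Icc 1 (t + 1) | candidateRank i t r} = ((t : ℝ) - 1) / (t + 1) := by
    intro t ht
    rw [mem_Ico] at ht
    rw [card_filter_maturityRank_of_lt ht.1 (by omega),
      card_filter_candidateRank_of_ne (by omega), Nat.cast_sub (by omega)]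
    push_cast
    rfl
  rw [prod_Ico_succ_top (by omega), prod_congr rfl hinterior,
    prod_Ico_sub_one_div_add_one hi (by omega),
    card_filter_maturityRank_of_succ_eq (by omega) (by omega) rfl,
    card_filter_candidateRank_of_ne (by omega)]
  push_cast
  rw [div_mul_div_comm]
  congr 1 <;> ring

end Maturity

/-- For `1 ≤ i < k ≤ N`, in a uniformly random permutation, the
conditional probability, given `Y_i = 2`, that `Y_m > 2` for all `i < m < k`
and `Y_k ∈ {1,2}` equals `2(i-1)i/((k-2)(k-1)k)`. -/
theorem duration_rank_two_maturity (N i k : ℕ) (hi : 1 ≤ i) (hik : i < k) (hk : k ≤ N) :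
    ((Finset.univ.filter (fun σ : Equiv.Perm (Fin N) =>
        relRank N σ ⟨i - 1, by omega⟩ = 2 ∧
        (∀ m : Fin N, i ≤ (m : ℕ) → (m : ℕ) + 1 < k → 2 < relRank N σ m) ∧
        (relRank N σ ⟨k - 1, by omega⟩ = 1 ∨ relRank N σ ⟨k - 1, by omega⟩ = 2))).card : ℝ) /
      ((Finset.univ.filter (fun σ : Equiv.Perm (Fin N) =>
        relRank N σ ⟨i - 1, by omega⟩ = 2)).card : ℝ)
    = 2 * ((i : ℝ) - 1) * i / (((k : ℝ) - 2) * ((k : ℝ) - 1) * k) := by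
  obtain rfl | hi := hi.eq_or_lt
  · have hfirst (σ : Equiv.Perm (Fin N)) : relRank N σ ⟨0, by omega⟩ ≠ 2 := by
      have := relRank_le σ ⟨0, by omega⟩
      simp only at this
      omega
    simp [hfirst]
  rw [filter_congr (q := fun σ => ∀ t : Fin N, maturityRank i k t (relRank N σ t))
      fun σ _ => by simp only [forall_and, forall_fin_val_eq_imp_iff (show i - 1 < N by omega),
        forall_fin_val_eq_imp_iff (show k - 1 < N by omega)],
    filter_congr (p := fun σ => relRank N σ ⟨i - 1, by omega⟩ = 2)
      (q := fun σ => ∀ t : Fin N, candidateRank i t (relRank N σ t)) fun σ _ => by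
      simp only [forall_fin_val_eq_imp_iff (show i - 1 < N by omega)]]
  rw [card_filter_forall_relRank, card_filter_forall_relRank]
  push_cast
  rw [← prod_div_distrib, Fin.prod_univ_eq_prod_range (fun t =>
    (#{r ∈ Icc 1 (t + 1) | maturityRank i k t r} : ℝ) / #{r ∈ Icc 1 (t + 1) | candidateRank i t r})]
  exact prod_range_maturityRank_div_candidateRank hi hik hk
end

section
/- For integers 1 ≤ i ≤ N with N ≥ 2, ∑_{s=i+1}^{N} (i/((s-1)s)) · (1 - ∑_{k=s+1}^{N} 2(s-1)s/((k-2)(k-1)k)) = i(N-i)/(N(N-1)). -/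
/-!
The partial fractions `2 / ((k-2)(k-1)k) = 1 / ((k-2)(k-1)) - 1 / ((k-1)k)` telescope the inner sum
to `1 / ((s-1)s) - 1 / ((N-1)N)`, so every outer summand equals `i / ((N-1)N)`, independently of `s`,
and there are `N - i` of them.
-/

open Finset

theorem one_div_sub_one_div_consecutive {K : Type*} [Field K] {x : K}
    (h₀ : x ≠ 0) (h₁ : x - 1 ≠ 0) (h₂ : x + 1 ≠ 0) :
    1 / ((x - 1) * x) - 1 / (x * (x + 1)) = 2 / ((x - 1) * x * (x + 1)) := by
  field_simp
  ring

theorem sum_Icc_two_div_mul_mul {s N : ℕ} (hs : 2 ≤ s) (hsN : s ≤ N) :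
    ∑ k ∈ Icc (s + 1) N, (2 : ℝ) / (((k : ℝ) - 2) * ((k : ℝ) - 1) * k)
      = 1 / (((s : ℝ) - 1) * s) - 1 / (((N : ℝ) - 1) * N) := by
  induction N, hsN using Nat.le_induction with
  | base => simp
  | succ n hsn ih =>
    have hn : (2 : ℝ) ≤ n := by exact_mod_cast hs.trans hsn
    rw [sum_Icc_succ_top (by omega), ih]
    push_cast
    rw [show (n : ℝ) + 1 - 2 = n - 1 by ring, show (n : ℝ) + 1 - 1 = n by ring,
      ← one_div_sub_one_div_consecutive (by positivity) (by linarith) (by positivity)]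
    ring

theorem div_mul_one_sub_sum_Icc_eq {i s N : ℕ} (hs : 2 ≤ s) (hsN : s ≤ N) :
    (i : ℝ) / (((s : ℝ) - 1) * s) *
        (1 - ∑ k ∈ Icc (s + 1) N, 2 * ((s : ℝ) - 1) * s / (((k : ℝ) - 2) * ((k : ℝ) - 1) * k))
      = i / (((N : ℝ) - 1) * N) := by
  have hs' : (2 : ℝ) ≤ s := by exact_mod_cast hs
  have hN : (2 : ℝ) ≤ N := by exact_mod_cast hs.trans hsN
  have hfactor : ∑ k ∈ Icc (s + 1) N, 2 * ((s : ℝ) - 1) * s / (((k : ℝ) - 2) * ((k : ℝ) - 1) * k)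
      = ((s : ℝ) - 1) * s * ∑ k ∈ Icc (s + 1) N, 2 / (((k : ℝ) - 2) * ((k : ℝ) - 1) * k) := by
    rw [mul_sum]
    exact sum_congr rfl fun k _ => by ring
  rw [hfactor, sum_Icc_two_div_mul_mul hs hsN]
  have : (s : ℝ) - 1 ≠ 0 := by linarith
  have : (N : ℝ) - 1 ≠ 0 := by linarith
  field_simp
  ring

theorem duration_best_then_second_general (i N : ℕ) (h1 : 1 ≤ i) (h2 : i ≤ N) :
    ∑ s ∈ Finset.Icc (i + 1) N,
        ((i : ℝ) / (((s : ℝ) - 1) * s)) *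
          (1 - ∑ k ∈ Finset.Icc (s + 1) N,
            2 * ((s : ℝ) - 1) * s / (((k : ℝ) - 2) * ((k : ℝ) - 1) * k))
      = (i : ℝ) * ((N : ℝ) - i) / ((N : ℝ) * ((N : ℝ) - 1)) := by
  have hsummand : ∀ s ∈ Icc (i + 1) N,
      (i : ℝ) / (((s : ℝ) - 1) * s) *
          (1 - ∑ k ∈ Icc (s + 1) N, 2 * ((s : ℝ) - 1) * s / (((k : ℝ) - 2) * ((k : ℝ) - 1) * k))
        = i / (((N : ℝ) - 1) * N) := fun s hs =>
    div_mul_one_sub_sum_Icc_eq (by grind) (mem_Icc.mp hs).2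
  rw [sum_congr rfl hsummand, sum_const, Nat.card_Icc, Nat.add_sub_add_right, nsmul_eq_mul,
    Nat.cast_sub h2]
  ring

/-- For `1 ≤ i ≤ N`, `N ≥ 2`,
`∑_{s=i+1}^{N} (i/((s-1)s))·(1 - ∑_{k=s+1}^{N} 2(s-1)s/((k-2)(k-1)k)) = i(N-i)/(N(N-1))`. -/
theorem duration_best_then_second (i N : ℕ) (h1 : 1 ≤ i) (h2 : i ≤ N) (h3 : 2 ≤ N) :
    ∑ s ∈ Finset.Icc (i + 1) N,
        ((i : ℝ) / (((s : ℝ) - 1) * s)) *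
          (1 - ∑ k ∈ Finset.Icc (s + 1) N,
            2 * ((s : ℝ) - 1) * s / (((k : ℝ) - 2) * ((k : ℝ) - 1) * k))
      = (i : ℝ) * ((N : ℝ) - i) / ((N : ℝ) * ((N : ℝ) - 1)) :=
  duration_best_then_second_general i N h1 h2
end

section
/- The equation μ² e^{2/μ} = e³ has a unique real solution μ* with μ* > 1, and μ* ∈ (3.31, 3.32). -/
/-!
The derivative of `x ↦ x² e^{2/x}` is `2 (x - 1) e^{2/x}`, so the function is strictly increasing
on `[1, ∞)`; hence the equation has at most one solution there. Truncated Taylor series of `exp`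
together with `2.7182818283 < e < 2.7182818286` show that the function lies below `e³` at `3.31`
and above it at `3.32`, and the intermediate value theorem supplies the solution in between.
-/

open Real Set

theorem hasDerivAt_sq_mul_exp_div (a : ℝ) {x : ℝ} (hx : x ≠ 0) :
    HasDerivAt (fun x : ℝ => x ^ 2 * exp (a / x)) ((2 * x - a) * exp (a / x)) x := by
  have hdiv : HasDerivAt (fun x : ℝ => a / x) (a * -(x ^ 2)⁻¹) x := by
    simpa only [div_eq_mul_inv] using (hasDerivAt_inv hx).const_mul a
  refine ((hasDerivAt_pow 2 x).mul hdiv.exp).congr_deriv ?_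
  field_simp
  ring

theorem continuousOn_sq_mul_exp_div {a b : ℝ} (hb : 0 < b) :
    ContinuousOn (fun x : ℝ => x ^ 2 * exp (a / x)) (Ici b) :=
  (continuousOn_pow 2).mul <| continuous_exp.comp_continuousOn <|
    continuousOn_const.div continuousOn_id fun _ hx => (hb.trans_le hx).ne'

theorem strictMonoOn_sq_mul_exp_div {a : ℝ} (ha : 0 < a) :
    StrictMonoOn (fun x : ℝ => x ^ 2 * exp (a / x)) (Ici (a / 2)) := by
  refine strictMonoOn_of_deriv_pos (convex_Ici _) (continuousOn_sq_mul_exp_div (by positivity))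
    fun x hx => ?_
  rw [interior_Ici, mem_Ioi] at hx
  rw [(hasDerivAt_sq_mul_exp_div a (by linarith : x ≠ 0)).deriv]
  exact mul_pos (by linarith) (exp_pos _)

theorem exp_three_eq_exp_one_pow : exp 3 = exp 1 ^ 3 := by
  rw [← exp_nat_mul]
  norm_num

theorem sq_mul_exp_two_div_lt_exp_three : (3.31 : ℝ) ^ 2 * exp (2 / 3.31) < exp 3 := by
  have htaylor : exp (2 / 3.31) ≤ ∑ m ∈ Finset.range 5, (2 / 3.31 : ℝ) ^ m / m.factorial
      + (2 / 3.31) ^ 5 * (5 + 1) / (Nat.factorial 5 * 5) :=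
    exp_bound' (by norm_num) (by norm_num) (by norm_num)
  have hnum : ∑ m ∈ Finset.range 5, (2 / 3.31 : ℝ) ^ m / m.factorial
      + (2 / 3.31) ^ 5 * (5 + 1) / (Nat.factorial 5 * 5) < 2.7182818283 ^ 3 / 3.31 ^ 2 := by
    simp only [Finset.sum_range_succ, Finset.sum_range_zero, Nat.factorial]
    norm_num
  have he : (2.7182818283 : ℝ) ^ 3 < exp 1 ^ 3 :=
    pow_lt_pow_left₀ exp_one_gt_d9 (by norm_num) (by norm_num)
  rw [exp_three_eq_exp_one_pow]
  calc (3.31 : ℝ) ^ 2 * exp (2 / 3.31) < 3.31 ^ 2 * (2.7182818283 ^ 3 / 3.31 ^ 2) := by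
        gcongr; exact htaylor.trans_lt hnum
    _ = 2.7182818283 ^ 3 := by norm_num
    _ < exp 1 ^ 3 := he

theorem exp_three_lt_sq_mul_exp_two_div : exp 3 < (3.32 : ℝ) ^ 2 * exp (2 / 3.32) := by
  have htaylor : ∑ m ∈ Finset.range 6, (2 / 3.32 : ℝ) ^ m / m.factorial ≤ exp (2 / 3.32) :=
    sum_le_exp_of_nonneg (by norm_num) 6
  have hnum : (2.7182818286 : ℝ) ^ 3 / 3.32 ^ 2
      < ∑ m ∈ Finset.range 6, (2 / 3.32 : ℝ) ^ m / m.factorial := by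
    simp only [Finset.sum_range_succ, Finset.sum_range_zero, Nat.factorial]
    norm_num
  have he : exp 1 ^ 3 < (2.7182818286 : ℝ) ^ 3 :=
    pow_lt_pow_left₀ exp_one_lt_d9 (exp_pos 1).le (by norm_num)
  rw [exp_three_eq_exp_one_pow]
  calc exp 1 ^ 3 < 2.7182818286 ^ 3 := he
    _ = 3.32 ^ 2 * (2.7182818286 ^ 3 / 3.32 ^ 2) := by norm_num
    _ < (3.32 : ℝ) ^ 2 * exp (2 / 3.32) := by
        gcongr; exact hnum.trans_le htaylor

/-- The equation `μ² e^{2/μ} = e³` has a unique real solution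
`μ* > 1`, and `μ* ∈ (3.31, 3.32)`. -/
theorem mu_star_unique :
    ∃ μ : ℝ, (1 < μ ∧ μ ^ 2 * Real.exp (2 / μ) = Real.exp 3) ∧
      (∀ μ' : ℝ, 1 < μ' → μ' ^ 2 * Real.exp (2 / μ') = Real.exp 3 → μ' = μ) ∧
      3.31 < μ ∧ μ < 3.32 := by
  have hmono := strictMonoOn_sq_mul_exp_div (a := 2) two_pos
  rw [div_self two_ne_zero] at hmono
  have hcont : ContinuousOn (fun x : ℝ => x ^ 2 * exp (2 / x)) (Icc 3.31 3.32) :=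
    (continuousOn_sq_mul_exp_div (by norm_num : (0 : ℝ) < 3.31)).mono Icc_subset_Ici_self
  obtain ⟨μ, ⟨hμ_gt, hμ_lt⟩, hμ⟩ := intermediate_value_Ioo (by norm_num) hcont
    ⟨sq_mul_exp_two_div_lt_exp_three, exp_three_lt_sq_mul_exp_two_div⟩
  have hμ_one : 1 < μ := by linarith
  refine ⟨μ, ⟨hμ_one, hμ⟩, fun μ' hμ'_one hμ' => ?_, hμ_gt, hμ_lt⟩
  exact hmono.injOn (mem_Ici.mpr hμ'_one.le) (mem_Ici.mpr hμ_one.le) (hμ'.trans hμ.symm)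
end

section
/- For integers 1 ≤ k < N, the difference φ(k+1,1) − φ(k,1) is decreasing in k, where φ(k,1) = (k/N²)(1 + k − N + 2N ∑_{j=k}^{N-1} 1/j). -/
/-!
Write `H k = ∑_{j=k}^{N-1} 1/j`, so that `N² φ(k,1) = k (1 + k − N) + 2N · k H k`.
Since `H k = 1/k + 1/(k+1) + H (k+2)`, the second difference of `k ↦ k H k` is `−1/(k+1)`,
while that of `k (1 + k − N)` is `2`. Hence the second difference of `φ(·,1)` is
`2/N² − 2/((k+1)N)`, which is negative as soon as `k + 1 < N`.
-/

open Finset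

/-- The expected proportional duration of stopping at time `k` on a relatively
best object: `φ(k,1) = (k/N²)(1 + k − N + 2N ∑_{j=k}^{N-1} 1/j)`. -/
noncomputable def phiBest (N k : ℕ) : ℝ :=
  ((k : ℝ) / (N : ℝ) ^ 2) *
    (1 + (k : ℝ) - (N : ℝ) + 2 * (N : ℝ) * ∑ j ∈ Finset.Ico k N, (1 : ℝ) / (j : ℝ))

lemma mul_sum_Ico_inv_second_difference {N k : ℕ} (hk : 0 < k) (hkN : k + 1 < N) :
    ((k : ℝ) + 2) * ∑ j ∈ Ico (k + 2) N, (1 : ℝ) / j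
      - 2 * ((k : ℝ) + 1) * ∑ j ∈ Ico (k + 1) N, (1 : ℝ) / j
      + (k : ℝ) * ∑ j ∈ Ico k N, (1 : ℝ) / j = -1 / (k + 1) := by
  rw [sum_eq_sum_Ico_succ_bot (by omega : k < N), sum_eq_sum_Ico_succ_bot hkN]
  have hk' : (k : ℝ) ≠ 0 := by positivity
  push_cast
  field_simp
  ring

lemma phiBest_second_difference {N k : ℕ} (hk : 0 < k) (hkN : k + 1 < N) :
    phiBest N (k + 2) - 2 * phiBest N (k + 1) + phiBest N k
      = 2 / (N : ℝ) ^ 2 - 2 / ((k + 1) * N) := by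
  have hN : (N : ℝ) ≠ 0 := by norm_cast; omega
  have hTail := mul_sum_Ico_inv_second_difference hk hkN
  simp only [phiBest]
  push_cast at hTail ⊢
  rw [eq_div_iff (by positivity)] at hTail
  field_simp
  linear_combination (2 * N) * hTail

/-- For `1 ≤ k < N` the difference `φ(k+1,1) − φ(k,1)` is
decreasing in `k`. -/
theorem phiBest_difference_decreasing (N k : ℕ) (h1 : 1 ≤ k) (h2 : k + 1 < N) :
    phiBest N (k + 2) - phiBest N (k + 1) < phiBest N (k + 1) - phiBest N k := by
  have hkN : (k : ℝ) + 1 < N := by exact_mod_cast h2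
  have hlt : 2 / (N : ℝ) ^ 2 < 2 / ((k + 1) * N) := by
    have hN : (0 : ℝ) < N := by linarith [(k.cast_nonneg : (0 : ℝ) ≤ k)]
    rw [sq]
    gcongr
  linarith [phiBest_second_difference h1 h2]
end
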